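/- arXiv:1709.05048 — 4 statements merged into one kernel-verified Lean document; each statement's English description precedes it below -/
import Mathlib

section
/- Let P be a symmetric positive definite n×n matrix, C an m×n matrix with nonzero rows C_i^T, and y̲_i < 0 < ȳ_i bounds for each i. Define W^min = min_i min{ȳ_i^2, y̲_i^2} / (C_i^T P^{-1} C_i). Then W^min equals the minimum of x^T P x over all x ≠ 0 lying on the boundary of the polytope P = {x : y̲ ≤ Cx ≤ ȳ}, i.e., over all x such that C_i^T x = y̲_i or C_i^T x = ȳ_i for some i. -/
/-!
For a nonzero row `c`, the Cauchy–Schwarz inequality for the inner product `⟨u, w⟩ = uᵀ P w`,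
applied to `P⁻¹ c` and `x`, reads `(cᵀ x)² ≤ (cᵀ P⁻¹ c) (xᵀ P x)`, with equality for `x` a
multiple of `P⁻¹ c`. Hence the minimum of `xᵀ P x` on the hyperplane `cᵀ x = b` is
`b² / (cᵀ P⁻¹ c)`. The boundary of the polytope is the finite union of the hyperplanes
`C_i x = y̲_i` and `C_i x = ȳ_i`, none of which passes through `0`, and the minimum over a finite
union is the least of the minima.
-/

open Matrix

theorem isLeast_iUnion_ciInf {ι α : Type*} [ConditionallyCompleteLinearOrder α] [Nonempty ι]
    [Finite ι] {s : ι → Set α} {u : ι → α} (hs : ∀ i, IsLeast (s i) (u i)) :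
    IsLeast (⋃ i, s i) (⨅ i, u i) := by
  refine ⟨?_, ?_⟩
  · obtain ⟨i, hi⟩ := exists_eq_ciInf_of_finite (f := u)
    exact Set.mem_iUnion.2 ⟨i, hi ▸ (hs i).1⟩
  · rintro v ⟨-, ⟨i, rfl⟩, hv⟩
    exact (ciInf_le (Finite.bddBelow_range u) i).trans ((hs i).2 hv)

theorem Matrix.IsSymm.dotProduct_mulVec_comm {n R : Type*} [Fintype n] [CommSemiring R]
    {A : Matrix n n R} (hA : A.IsSymm) (v w : n → R) : v ⬝ᵥ (A *ᵥ w) = w ⬝ᵥ (A *ᵥ v) := by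
  rw [dotProduct_mulVec, ← mulVec_transpose, hA.eq, dotProduct_comm]

namespace Matrix.PosDef

variable {n : Type*} [Fintype n] {P : Matrix n n ℝ}

theorem mulVec_inv_mulVec [DecidableEq n] (hP : P.PosDef) (y : n → ℝ) :
    P *ᵥ (P⁻¹ *ᵥ y) = y := by
  rw [mulVec_mulVec, mul_nonsing_inv P ((isUnit_iff_isUnit_det P).1 hP.isUnit), one_mulVec]

theorem dotProduct_inv_mulVec_pos [DecidableEq n] (hP : P.PosDef) {c : n → ℝ} (hc : c ≠ 0) :
    0 < c ⬝ᵥ (P⁻¹ *ᵥ c) := by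
  simpa using hP.inv.dotProduct_mulVec_pos hc

theorem sq_dotProduct_le [DecidableEq n] (hP : P.PosDef) (c x : n → ℝ) :
    (c ⬝ᵥ x) ^ 2 ≤ (c ⬝ᵥ (P⁻¹ *ᵥ c)) * (x ⬝ᵥ (P *ᵥ x)) := by
  rcases eq_or_ne c 0 with rfl | hc
  · simp
  set q := c ⬝ᵥ (P⁻¹ *ᵥ c)
  set v := P⁻¹ *ᵥ c
  have hq : 0 < q := hP.dotProduct_inv_mulVec_pos hc
  have hPv : P *ᵥ v = c := hP.mulVec_inv_mulVec c
  have hvx : v ⬝ᵥ (P *ᵥ x) = c ⬝ᵥ x := by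
    rw [(isHermitian_iff_isSymm.1 hP.isHermitian).dotProduct_mulVec_comm, hPv, dotProduct_comm]
  have hw : 0 ≤ (q • x - (c ⬝ᵥ x) • v) ⬝ᵥ (P *ᵥ (q • x - (c ⬝ᵥ x) • v)) := by
    simpa using hP.posSemidef.dotProduct_mulVec_nonneg (q • x - (c ⬝ᵥ x) • v)
  have hexpand : (q • x - (c ⬝ᵥ x) • v) ⬝ᵥ (P *ᵥ (q • x - (c ⬝ᵥ x) • v))
      = q * (q * (x ⬝ᵥ (P *ᵥ x)) - (c ⬝ᵥ x) ^ 2) := by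
    simp only [mulVec_sub, mulVec_smul, dotProduct_sub, sub_dotProduct, dotProduct_smul,
      smul_dotProduct, smul_eq_mul, hPv, hvx]
    rw [dotProduct_comm x c, dotProduct_comm v c]
    ring
  have := (mul_nonneg_iff_of_pos_left hq).1 (hexpand ▸ hw)
  linarith

theorem isLeast_dotProduct_mulVec_of_dotProduct_eq [DecidableEq n] (hP : P.PosDef)
    {c : n → ℝ} (hc : c ≠ 0) (b : ℝ) :
    IsLeast {v | ∃ x, c ⬝ᵥ x = b ∧ v = x ⬝ᵥ (P *ᵥ x)} (b ^ 2 / (c ⬝ᵥ (P⁻¹ *ᵥ c))) := by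
  have hq := hP.dotProduct_inv_mulVec_pos hc
  refine ⟨⟨(b / (c ⬝ᵥ (P⁻¹ *ᵥ c))) • (P⁻¹ *ᵥ c), ?_, ?_⟩, ?_⟩
  · rw [dotProduct_smul, smul_eq_mul, div_mul_cancel₀ b hq.ne']
  · rw [mulVec_smul, hP.mulVec_inv_mulVec, dotProduct_smul, smul_dotProduct, smul_eq_mul,
      smul_eq_mul, dotProduct_comm _ c]
    field_simp
  · rintro _ ⟨x, rfl, rfl⟩
    rw [div_le_iff₀ hq, mul_comm]
    exact hP.sq_dotProduct_le c x

end Matrix.PosDef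

theorem stmt1 {m n : ℕ} (hm : 0 < m) (P : Matrix (Fin n) (Fin n) ℝ) (hP : P.PosDef)
    (C : Matrix (Fin m) (Fin n) ℝ) (hC : ∀ i, C i ≠ 0)
    (ylo yhi : Fin m → ℝ) (hy : ∀ i, ylo i < 0 ∧ 0 < yhi i) :
    IsLeast {v : ℝ | ∃ x : Fin n → ℝ, x ≠ 0 ∧
        (∃ i, C i ⬝ᵥ x = ylo i ∨ C i ⬝ᵥ x = yhi i) ∧ v = x ⬝ᵥ (P *ᵥ x)}
      (⨅ i : Fin m, min ((yhi i) ^ 2) ((ylo i) ^ 2) / (C i ⬝ᵥ (P⁻¹ *ᵥ C i))) := by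
  have : Nonempty (Fin m) := ⟨⟨0, hm⟩⟩
  have hrow : ∀ i, IsLeast ({v | ∃ x, C i ⬝ᵥ x = yhi i ∧ v = x ⬝ᵥ (P *ᵥ x)} ∪
      {v | ∃ x, C i ⬝ᵥ x = ylo i ∧ v = x ⬝ᵥ (P *ᵥ x)})
      (min ((yhi i) ^ 2) ((ylo i) ^ 2) / (C i ⬝ᵥ (P⁻¹ *ᵥ C i))) := fun i => by
    rw [← min_div_div_right (hP.dotProduct_inv_mulVec_pos (hC i)).le]
    exact (hP.isLeast_dotProduct_mulVec_of_dotProduct_eq (hC i) _).union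
      (hP.isLeast_dotProduct_mulVec_of_dotProduct_eq (hC i) _)
  convert isLeast_iUnion_ciInf hrow using 1
  · rfl
  ext v
  simp only [Set.mem_iUnion, Set.mem_union, Set.mem_ofPred_eq]
  constructor
  · rintro ⟨x, -, ⟨i, hlo | hhi⟩, rfl⟩
    exacts [⟨i, .inr ⟨x, hlo, rfl⟩⟩, ⟨i, .inl ⟨x, hhi, rfl⟩⟩]
  · rintro ⟨i, ⟨x, hx, rfl⟩ | ⟨x, hx, rfl⟩⟩
    · exact ⟨x, by rintro rfl; simp [(hy i).2.ne] at hx, ⟨i, .inr hx⟩, rfl⟩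
    · exact ⟨x, by rintro rfl; simp [(hy i).1.ne'] at hx, ⟨i, .inl hx⟩, rfl⟩
end

section
/- Let λ > 0, Δl > 0, and let X̲, X̄ satisfy −2Δl ≤ X̲ ≤ 0 ≤ X̄ ≤ 2Δl. Define ψ = {(X, W) ∈ R^2 : X̲ ≤ X ≤ X̄, 0 ≤ W, W ≤ λ(X − Δl)^2, W ≤ λ(X + Δl)^2} and Ψ = {(X, W) ∈ R^2 : X̲ ≤ X ≤ X̄, 0 ≤ W, W ≤ λ((X̄ − 2Δl)X + Δl^2), W ≤ λ((X̲ + 2Δl)X + Δl^2)}. Then Ψ is the convex hull of ψ. -/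
/-! Ψ is the pentagon with vertices `(X̲, 0)`, `(X̄, 0)`, `(X̲, λ(X̲ + Δl)²)`, `(0, λΔl²)` and
`(X̄, λ(X̄ - Δl)²)`, all of which lie in ψ; every point of Ψ sits on a vertical segment from the
base to one of the two upper edges, so Ψ ⊆ conv ψ. Conversely, Ψ is convex and contains ψ: the
left edge is the chord of `λ(X + Δl)²` over `[X̲, 0]`, so it lies above that parabola there, and
above `λ(X - Δl)²` on `[0, X̄]` because `X̄ - X̲ ≤ 4Δl`; symmetrically for the right edge. -/

open Set

/-- The set `ψ`. -/
def parabolaRegion (lam Δl Xlo Xhi : ℝ) : Set (ℝ × ℝ) :=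
  {p | Xlo ≤ p.1 ∧ p.1 ≤ Xhi ∧ 0 ≤ p.2 ∧ p.2 ≤ lam * (p.1 - Δl) ^ 2 ∧ p.2 ≤ lam * (p.1 + Δl) ^ 2}

/-- The set `Ψ`. -/
def chordRegion (lam Δl Xlo Xhi : ℝ) : Set (ℝ × ℝ) :=
  {p | Xlo ≤ p.1 ∧ p.1 ≤ Xhi ∧ 0 ≤ p.2 ∧
    p.2 ≤ lam * ((Xhi - 2 * Δl) * p.1 + Δl ^ 2) ∧ p.2 ≤ lam * ((Xlo + 2 * Δl) * p.1 + Δl ^ 2)}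

-- `(a + 2d) x + d²` is the chord of `(x + d)²` between `a` and `0`.
theorem min_sq_le_chord_left {a d x : ℝ} (ha : a ≤ x) (hx : x ≤ a + 4 * d) :
    min ((x - d) ^ 2) ((x + d) ^ 2) ≤ (a + 2 * d) * x + d ^ 2 := by
  rcases le_total x 0 with h | h
  · exact (min_le_right _ _).trans (by nlinarith)
  · exact (min_le_left _ _).trans (by nlinarith)

theorem min_sq_le_chord_right {b d x : ℝ} (hx : b - 4 * d ≤ x) (hb : x ≤ b) :
    min ((x - d) ^ 2) ((x + d) ^ 2) ≤ (b - 2 * d) * x + d ^ 2 := by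
  rcases le_total x 0 with h | h
  · exact (min_le_right _ _).trans (by nlinarith)
  · exact (min_le_left _ _).trans (by nlinarith)

theorem convex_setOf_le_of_concaveOn {a b : ℝ} {f g : ℝ → ℝ} (hf : ConcaveOn ℝ (Icc a b) f)
    (hg : ConcaveOn ℝ (Icc a b) g) :
    Convex ℝ {p : ℝ × ℝ | a ≤ p.1 ∧ p.1 ≤ b ∧ 0 ≤ p.2 ∧ p.2 ≤ f p.1 ∧ p.2 ≤ g p.1} := by
  have h0 : Convex ℝ {p : ℝ × ℝ | 0 ≤ p.2} := convex_halfSpace_ge (LinearMap.snd ℝ ℝ ℝ).isLinear 0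
  convert (hf.convex_hypograph.inter hg.convex_hypograph).inter h0 using 1
  ext p
  simp only [mem_inter_iff, mem_ofPred_eq, mem_Icc]
  tauto

theorem Convex.mk_mul_add_mem_of_mem_uIcc {S : Set (ℝ × ℝ)} (hS : Convex ℝ S) {a b x m k : ℝ}
    (ha : (a, m * a + k) ∈ S) (hb : (b, m * b + k) ∈ S) (hx : x ∈ uIcc a b) :
    (x, m * x + k) ∈ S := by
  rw [← segment_eq_uIcc] at hx
  obtain ⟨s, t, hs, ht, hst, rfl⟩ := hx
  convert hS ha hb hs ht hst using 1
  ext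
  · simp only [smul_eq_mul, Prod.fst_add, Prod.smul_fst]
  · simp only [smul_eq_mul, Prod.snd_add, Prod.smul_snd]
    linear_combination -k * hst

theorem Convex.mk_mem_of_mem_Icc {S : Set (ℝ × ℝ)} (hS : Convex ℝ S) {x y₀ y₁ y : ℝ}
    (h₀ : (x, y₀) ∈ S) (h₁ : (x, y₁) ∈ S) (hy : y ∈ Icc y₀ y₁) : (x, y) ∈ S := by
  rw [← segment_eq_Icc (hy.1.trans hy.2)] at hy
  obtain ⟨s, t, hs, ht, hst, rfl⟩ := hy
  convert hS h₀ h₁ hs ht hst using 1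
  ext
  · simp only [smul_eq_mul, Prod.fst_add, Prod.smul_fst]
    linear_combination -x * hst
  · simp only [smul_eq_mul, Prod.snd_add, Prod.smul_snd]

theorem Convex.mk_mem_of_le_chord {S : Set (ℝ × ℝ)} (hS : Convex ℝ S) {lam c d x w : ℝ}
    (hc : (c, lam * (c + d) ^ 2) ∈ S) (h0 : ((0 : ℝ), lam * d ^ 2) ∈ S) (hbase : (x, (0 : ℝ)) ∈ S)
    (hx : x ∈ uIcc c 0) (hw : w ∈ Icc 0 (lam * ((c + 2 * d) * x + d ^ 2))) : (x, w) ∈ S := by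
  have hchord : (x, lam * (c + 2 * d) * x + lam * d ^ 2) ∈ S := by
    refine hS.mk_mul_add_mem_of_mem_uIcc ?_ ?_ hx
    · convert hc using 2; ring
    · convert h0 using 2; ring
  exact hS.mk_mem_of_mem_Icc hbase (by convert hchord using 2; ring) hw

section

variable {lam Δl Xlo Xhi : ℝ}

theorem convex_chordRegion (hlam : 0 ≤ lam) : Convex ℝ (chordRegion lam Δl Xlo Xhi) := by
  have hchord (m : ℝ) : ConcaveOn ℝ (Icc Xlo Xhi) fun x => lam * (m * x + Δl ^ 2) :=
    (((LinearMap.mul ℝ ℝ m).concaveOn (convex_Icc _ _)).add_const _).smul hlam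
  exact convex_setOf_le_of_concaveOn (hchord _) (hchord _)

theorem parabolaRegion_subset_chordRegion (hlam : 0 ≤ lam) (hlen : Xhi ≤ Xlo + 4 * Δl) :
    parabolaRegion lam Δl Xlo Xhi ⊆ chordRegion lam Δl Xlo Xhi := by
  rintro ⟨x, w⟩ ⟨hlo, hhi, hw0, hw₁, hw₂⟩
  have hmin : w ≤ lam * min ((x - Δl) ^ 2) ((x + Δl) ^ 2) := by
    rw [mul_min_of_nonneg _ _ hlam]
    exact le_min hw₁ hw₂
  refine ⟨hlo, hhi, hw0, hmin.trans ?_, hmin.trans ?_⟩ <;> gcongr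
  · exact min_sq_le_chord_right (by linarith) hhi
  · exact min_sq_le_chord_left hlo (by linarith)

theorem chordRegion_subset_convexHull (hlam : 0 ≤ lam) (hΔl : 0 ≤ Δl) (hlo : Xlo ≤ 0)
    (hhi : 0 ≤ Xhi) :
    chordRegion lam Δl Xlo Xhi ⊆ convexHull ℝ (parabolaRegion lam Δl Xlo Xhi) := by
  have hS := convex_convexHull ℝ (parabolaRegion lam Δl Xlo Xhi)
  have hsub := subset_convexHull ℝ (parabolaRegion lam Δl Xlo Xhi)
  have hlohi : Xlo ≤ Xhi := hlo.trans hhi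
  have hbase_lo : (Xlo, (0 : ℝ)) ∈ parabolaRegion lam Δl Xlo Xhi :=
    ⟨le_rfl, hlohi, le_rfl, by positivity, by positivity⟩
  have hbase_hi : (Xhi, (0 : ℝ)) ∈ parabolaRegion lam Δl Xlo Xhi :=
    ⟨hlohi, le_rfl, le_rfl, by positivity, by positivity⟩
  have hcorner_lo : (Xlo, lam * (Xlo + Δl) ^ 2) ∈ parabolaRegion lam Δl Xlo Xhi :=
    ⟨le_rfl, hlohi, by positivity,
      by nlinarith [mul_nonneg hlam (mul_nonneg hΔl (neg_nonneg.2 hlo))], le_rfl⟩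
  have hcorner_hi : (Xhi, lam * (Xhi + -Δl) ^ 2) ∈ parabolaRegion lam Δl Xlo Xhi :=
    ⟨hlohi, le_rfl, by positivity, le_of_eq (by ring),
      by nlinarith [mul_nonneg hlam (mul_nonneg hΔl hhi)]⟩
  have hpeak : ((0 : ℝ), lam * Δl ^ 2) ∈ parabolaRegion lam Δl Xlo Xhi :=
    ⟨hlo, hhi, by positivity, le_of_eq (by ring), le_of_eq (by ring)⟩
  rintro ⟨x, w⟩ ⟨hxlo, hxhi, hw0, hw_hi, hw_lo⟩
  have hbase : (x, (0 : ℝ)) ∈ convexHull ℝ (parabolaRegion lam Δl Xlo Xhi) := by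
    simpa using hS.mk_mul_add_mem_of_mem_uIcc (m := 0) (k := 0) (by simpa using hsub hbase_lo)
      (by simpa using hsub hbase_hi) (Icc_subset_uIcc ⟨hxlo, hxhi⟩)
  rcases le_total x 0 with hx | hx
  · exact hS.mk_mem_of_le_chord (hsub hcorner_lo) (hsub hpeak) hbase
      (Icc_subset_uIcc ⟨hxlo, hx⟩) ⟨hw0, hw_lo⟩
  · exact hS.mk_mem_of_le_chord (hsub hcorner_hi) (by rw [neg_sq]; exact hsub hpeak) hbase
      (Icc_subset_uIcc' ⟨hx, hxhi⟩) ⟨hw0, hw_hi.trans_eq (by ring)⟩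

end

theorem stmt4 (lam Δl Xlo Xhi : ℝ) (hlam : 0 < lam) (hΔl : 0 < Δl)
    (h1 : -(2 * Δl) ≤ Xlo) (h2 : Xlo ≤ 0) (h3 : 0 ≤ Xhi) (h4 : Xhi ≤ 2 * Δl) :
    {p : ℝ × ℝ | Xlo ≤ p.1 ∧ p.1 ≤ Xhi ∧ 0 ≤ p.2 ∧
        p.2 ≤ lam * ((Xhi - 2 * Δl) * p.1 + Δl ^ 2) ∧
        p.2 ≤ lam * ((Xlo + 2 * Δl) * p.1 + Δl ^ 2)} =
      convexHull ℝ {p : ℝ × ℝ | Xlo ≤ p.1 ∧ p.1 ≤ Xhi ∧ 0 ≤ p.2 ∧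
        p.2 ≤ lam * (p.1 - Δl) ^ 2 ∧ p.2 ≤ lam * (p.1 + Δl) ^ 2} := by
  show chordRegion lam Δl Xlo Xhi = convexHull ℝ (parabolaRegion lam Δl Xlo Xhi)
  refine (chordRegion_subset_convexHull hlam.le hΔl.le h2 h3).antisymm ?_
  exact convexHull_min (parabolaRegion_subset_chordRegion hlam.le (by linarith))
    (convex_chordRegion hlam.le)
end

section
/- Let λ > 0, Δl > 0, and −2Δl ≤ X̲ ≤ 0 ≤ X̄ ≤ 2Δl. The set ψ = {(X, W) : X̲ ≤ X ≤ X̄, 0 ≤ W ≤ min(λ(X − Δl)^2, λ(X + Δl)^2)} is contained in the set Ψ = {(X, W) : X̲ ≤ X ≤ X̄, 0 ≤ W, W ≤ λ((X̄ − 2Δl)X + Δl^2), W ≤ λ((X̲ + 2Δl)X + Δl^2)}. -/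
/-!
On `0 ≤ X` the smaller parabola is `(X - Δl)^2`, which lies below its chord through
`X = 0` and `X = X̄`. On `-2Δl ≤ X ≤ 0` it is `(X + Δl)^2 ≤ Δl^2`, while that chord has
nonpositive slope, so it is at least `Δl^2` there. The chord through `X̲` and `0` is the
mirror image under `X ↦ -X`.
-/

namespace ParabolaChord

variable {x a b d : ℝ}

lemma sq_sub_le_chord (hx : 0 ≤ x) (hxb : x ≤ b) : (x - d) ^ 2 ≤ (b - 2 * d) * x + d ^ 2 := by
  nlinarith

lemma sq_add_le_sq (hx : -(2 * d) ≤ x) (hx0 : x ≤ 0) : (x + d) ^ 2 ≤ d ^ 2 := by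
  nlinarith

lemma min_sq_le_upper_chord (hx : -(2 * d) ≤ x) (hxb : x ≤ b) (hb : b ≤ 2 * d) :
    min ((x - d) ^ 2) ((x + d) ^ 2) ≤ (b - 2 * d) * x + d ^ 2 := by
  rcases le_total 0 x with hx0 | hx0
  · exact (min_le_left _ _).trans (sq_sub_le_chord hx0 hxb)
  · calc min ((x - d) ^ 2) ((x + d) ^ 2) ≤ (x + d) ^ 2 := min_le_right _ _
      _ ≤ d ^ 2 := sq_add_le_sq hx hx0
      _ ≤ (b - 2 * d) * x + d ^ 2 := by nlinarith

lemma min_sq_le_lower_chord (ha : -(2 * d) ≤ a) (hax : a ≤ x) (hx : x ≤ 2 * d) :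
    min ((x - d) ^ 2) ((x + d) ^ 2) ≤ (a + 2 * d) * x + d ^ 2 := by
  have h := min_sq_le_upper_chord (x := -x) (b := -a) (d := d) (by linarith) (by linarith)
    (by linarith)
  calc min ((x - d) ^ 2) ((x + d) ^ 2) = min ((-x - d) ^ 2) ((-x + d) ^ 2) := by
        rw [min_comm]; ring_nf
    _ ≤ (-a - 2 * d) * -x + d ^ 2 := h
    _ = (a + 2 * d) * x + d ^ 2 := by ring

end ParabolaChord

open ParabolaChord in
theorem stmt5_general (lam Δl Xlo Xhi : ℝ) (hlam : 0 < lam)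
    (h1 : -(2 * Δl) ≤ Xlo) (h4 : Xhi ≤ 2 * Δl) :
    {p : ℝ × ℝ | Xlo ≤ p.1 ∧ p.1 ≤ Xhi ∧ 0 ≤ p.2 ∧
        p.2 ≤ min (lam * (p.1 - Δl) ^ 2) (lam * (p.1 + Δl) ^ 2)} ⊆
      {p : ℝ × ℝ | Xlo ≤ p.1 ∧ p.1 ≤ Xhi ∧ 0 ≤ p.2 ∧
        p.2 ≤ lam * ((Xhi - 2 * Δl) * p.1 + Δl ^ 2) ∧
        p.2 ≤ lam * ((Xlo + 2 * Δl) * p.1 + Δl ^ 2)} := by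
  rintro ⟨X, W⟩ ⟨hXlo, hXhi, hW0, hW⟩
  rw [← mul_min_of_nonneg _ _ hlam.le] at hW
  refine ⟨hXlo, hXhi, hW0, hW.trans ?_, hW.trans ?_⟩
  · exact mul_le_mul_of_nonneg_left
      (min_sq_le_upper_chord (by linarith) hXhi h4) hlam.le
  · exact mul_le_mul_of_nonneg_left
      (min_sq_le_lower_chord h1 hXlo (by linarith)) hlam.le

theorem stmt5 (lam Δl Xlo Xhi : ℝ) (hlam : 0 < lam) (hΔl : 0 < Δl)
    (h1 : -(2 * Δl) ≤ Xlo) (h2 : Xlo ≤ 0) (h3 : 0 ≤ Xhi) (h4 : Xhi ≤ 2 * Δl) :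
    {p : ℝ × ℝ | Xlo ≤ p.1 ∧ p.1 ≤ Xhi ∧ 0 ≤ p.2 ∧
        p.2 ≤ min (lam * (p.1 - Δl) ^ 2) (lam * (p.1 + Δl) ^ 2)} ⊆
      {p : ℝ × ℝ | Xlo ≤ p.1 ∧ p.1 ≤ Xhi ∧ 0 ≤ p.2 ∧
        p.2 ≤ lam * ((Xhi - 2 * Δl) * p.1 + Δl ^ 2) ∧
        p.2 ≤ lam * ((Xlo + 2 * Δl) * p.1 + Δl ^ 2)} :=
  stmt5_general lam Δl Xlo Xhi hlam h1 h4
end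

section
/- Fix real constants θ' and α with |θ' + α| < π/2, and let β = 1. Define φ(s) = sin(s + θ' + α) − sin(θ' + α) for s ∈ R. Then for all s with −π − 2θ' − 2α ≤ s ≤ π − 2θ' − 2α, the sector bound 0 ≤ φ(s)·s ≤ β s^2 holds; that is, φ lies in the sector [0, 1] on this interval. -/
theorem stmt8 (θ' α : ℝ) (h : |θ' + α| < Real.pi / 2) :
    ∀ s : ℝ, -Real.pi - 2 * θ' - 2 * α ≤ s → s ≤ Real.pi - 2 * θ' - 2 * α →
      0 ≤ (Real.sin (s + θ' + α) - Real.sin (θ' + α)) * s ∧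
      (Real.sin (s + θ' + α) - Real.sin (θ' + α)) * s ≤ 1 * s ^ 2 := by
  intro s hl hu
  obtain ⟨hc1, hc2⟩ := abs_lt.mp h
  constructor
  · have hfact : Real.sin (s + θ' + α) - Real.sin (θ' + α)
        = 2 * Real.sin (s / 2) * Real.cos (s / 2 + (θ' + α)) := by
      have := Real.sin_sub_sin (s + θ' + α) (θ' + α)
      rw [this]; ring_nf
    rw [hfact]
    have hcos : 0 ≤ Real.cos (s / 2 + (θ' + α)) := by
      apply Real.cos_nonneg_of_mem_Icc
      constructor <;> [linarith; linarith]
    rcases le_or_gt 0 s with hs | hs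
    · have hsin : 0 ≤ Real.sin (s / 2) := by
        apply Real.sin_nonneg_of_nonneg_of_le_pi <;> linarith
      positivity
    · have hsin : Real.sin (s / 2) ≤ 0 := by
        have : 0 ≤ Real.sin (-(s / 2)) := by
          apply Real.sin_nonneg_of_nonneg_of_le_pi <;> linarith
        rw [Real.sin_neg] at this; linarith
      nlinarith [mul_nonneg (mul_nonneg (by linarith : (0:ℝ) ≤ -Real.sin (s / 2)) hcos)
        (by linarith : (0:ℝ) ≤ -s)]
  · have hlip : |Real.sin (s + θ' + α) - Real.sin (θ' + α)| ≤ |s| := by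
      have hfact : Real.sin (s + θ' + α) - Real.sin (θ' + α)
          = 2 * Real.sin (s / 2) * Real.cos (s / 2 + (θ' + α)) := by
        have := Real.sin_sub_sin (s + θ' + α) (θ' + α)
        rw [this]; ring_nf
      rw [hfact]
      have h1 : |Real.sin (s / 2)| ≤ |s / 2| := Real.abs_sin_le_abs
      have h2 : |Real.cos (s / 2 + (θ' + α))| ≤ 1 := Real.abs_cos_le_one _
      rw [abs_mul, abs_mul]
      calc |(2:ℝ)| * |Real.sin (s / 2)| * |Real.cos (s / 2 + (θ' + α))|
          ≤ |(2:ℝ)| * |s / 2| * 1 := by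
            apply mul_le_mul _ h2 (abs_nonneg _) (by positivity)
            exact mul_le_mul_of_nonneg_left h1 (abs_nonneg _)
        _ = |s| := by rw [abs_div]; simp [abs_of_nonneg]; ring
    calc (Real.sin (s + θ' + α) - Real.sin (θ' + α)) * s
        ≤ |Real.sin (s + θ' + α) - Real.sin (θ' + α)| * |s| := by
          rw [← abs_mul]; exact le_abs_self _
      _ ≤ |s| * |s| := by
          exact mul_le_mul_of_nonneg_right hlip (abs_nonneg _)
      _ = 1 * s ^ 2 := by rw [← abs_mul, abs_mul_self]; ring
end
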